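/- arXiv:1703.04169 — 5 statements merged into one kernel-verified Lean document; each statement's English description precedes it below -/
import Mathlib

section
/- Let X, Y be sets and φ ⊆ X × Y a relation. Call a relation ψ ⊆ X × Y equational if it is not the case that for arbitrarily large n ∈ ℕ there are sequences (a_i)_{i ≤ n} in X and (b_j)_{j ≤ n} in Y with ψ(a_i, b_j) for all i < j ≤ n but ¬ψ(a_i, b_i) for all i ≤ n. Suppose that for every n ∈ ℕ there exist matrices (a_{ij})_{i,j ≤ n} in X and (b_{kl})_{k,l ≤ n} in Y such that φ(a_{ij}, b_{kl}) holds if and only if i ≠ k or (i,j) = (k,l). Then φ cannot be written as ψ₁ ∩ ψ₂ᶜ with ψ₁ and ψ₂ both equational. -/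
/-- A relation `ψ ⊆ X × Y` is "non-equational" if for arbitrarily large `n` there are
sequences `(a_i)`, `(b_j)` with `ψ (a i) (b j)` for all `i < j` but `¬ ψ (a i) (b i)`. -/
def NonEquational {X Y : Type*} (ψ : X → Y → Prop) : Prop :=
  ∀ n : ℕ, ∃ m : ℕ, n ≤ m ∧ ∃ (a : Fin m → X) (b : Fin m → Y),
    (∀ i j : Fin m, i < j → ψ (a i) (b j)) ∧ ∀ i : Fin m, ¬ ψ (a i) (b i)

theorem stmt0 {X Y : Type*} (φ : X → Y → Prop)
    (h : ∀ n : ℕ, ∃ m : ℕ, n ≤ m ∧ ∃ (a : Fin m → Fin m → X) (b : Fin m → Fin m → Y),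
      ∀ i j k l : Fin m, φ (a i j) (b k l) ↔ (i ≠ k ∨ (i, j) = (k, l))) :
    ¬ ∃ ψ₁ ψ₂ : X → Y → Prop,
      (∀ x y, φ x y ↔ (ψ₁ x y ∧ ¬ ψ₂ x y)) ∧ ¬ NonEquational ψ₁ ∧ ¬ NonEquational ψ₂ := by
  rintro ⟨ψ₁, ψ₂, hφ, h1, h2⟩
  unfold NonEquational at h1 h2
  push_neg at h1 h2
  obtain ⟨n1, hn1⟩ := h1
  obtain ⟨n2, hn2⟩ := h2
  obtain ⟨m, hm, a, b, hab⟩ := h (max n1 n2)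
  by_cases hc : ∀ i : Fin m, ∃ j l : Fin m, j ≠ l ∧ ¬ ψ₁ (a i j) (b i l)
  · -- ψ₁ witnesses across blocks
    choose j l hjl hψ using hc
    refine (hn1 m (le_trans (le_max_left _ _) hm) (fun i => a i (j i))
      (fun i => b i (l i)) (fun i k hik => ?_)).elim hψ
    have : φ (a i (j i)) (b k (l k)) := (hab i (j i) k (l k)).2 (Or.inl hik.ne)
    exact ((hφ _ _).1 this).1
  · push_neg at hc
    obtain ⟨i, hi⟩ := hc
    -- ψ₂ witnesses within block i
    refine (hn2 m (le_trans (le_max_right _ _) hm) (fun j => a i j)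
      (fun j => b i j) (fun j k hjk => ?_)).elim (fun j hj => ?_)
    · have hψ1 := hi j k hjk.ne
      have hnφ : ¬ φ (a i j) (b i k) := by
        rw [hab]
        push_neg
        exact ⟨rfl, fun he => hjk.ne (by simpa using he)⟩
      by_contra hψ2
      exact hnφ ((hφ _ _).2 ⟨hψ1, hψ2⟩)
    · exact ((hφ _ _).1 ((hab i j i j).2 (Or.inr rfl))).2 hj
end

section
/- Let F be a free group and a ∈ F a primitive element (part of some basis of F). If H is a subgroup of F containing a, then a is a primitive element of H (H is free by the Nielsen–Schreier theorem). -/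
/-!
Let `a` be a basis element of the free group `G` lying in `H`. The subgroup `H` is the vertex group
at the coset `H` of the action groupoid of `G` on `G ⧸ H`, a covering of the rose on the basis of
`G`. This groupoid is free on the arrows `x : gH ⟶ xgH` for basis elements `x`, and for a spanning
tree `T` of its generating graph, closing up the arrows outside `T` through `T` gives a basis of
the vertex group at the root. The arrow `a : H ⟶ aH = H` is a loop at the root, so it is not in
`T`, and closing it up gives `a` back. A general primitive element is moved to a basis element by
an automorphism of `G`.
-/

/-- An element of a group is primitive if it is part of some free basis. -/
def IsPrimitive {G : Type*} [Group G] (a : G) : Prop :=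
  ∃ (ι : Type) (b : FreeGroupBasis ι G) (i : ι), b i = a

open CategoryTheory CategoryTheory.SingleObj Quiver IsFreeGroupoid

universe u

theorem Quiver.isEmpty_hom_root {V : Type*} [Quiver V] [Arborescence V] (a : V) :
    IsEmpty (a ⟶ root V) := by
  refine ⟨fun e => ?_⟩
  have h := congrArg Path.length (Subsingleton.elim ((default : Path (root V) a).cons e) Path.nil)
  simp at h

namespace IsFreeGroupoid.SpanningTree

variable {G : Type u} [Groupoid.{u} G] [IsFreeGroupoid G]
  (T : WideSubquiver (Symmetrify <| Generators G)) [Arborescence T]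

/-- Mathlib's own name for this vertex, `root'`, is private. -/
abbrev treeRoot : G := root T

lemma loopOfHom_root (p : End (treeRoot T)) : loopOfHom T p = p := by
  have h : treeHom T (treeRoot T) = 𝟙 _ := treeHom_root T
  simp only [loopOfHom, h]
  erw [IsIso.inv_id, Category.comp_id, Category.id_comp]

lemma map_homOfPath_eq_one {X : Type u} [Group X] (F : G ⥤ CategoryTheory.SingleObj X)
    (hF : ∀ a b (e : a ⟶ b), e ∈ wideSubquiverSymmetrify T a b → F.map (of e) = 1)
    {a : G} (p : Path (root T) a) : F.map (homOfPath T p) = 1 := by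
  induction p with
  | nil => exact F.map_id _
  | cons p e ih =>
    erw [homOfPath, F.map_comp, comp_as_mul, ih, mul_one]
    rcases e with ⟨e | e, he⟩
    · exact hF _ _ e (Or.inl he)
    · rw [F.map_inv, inv_as_inv, inv_eq_one]
      exact hF _ _ e (Or.inr he)

lemma map_loopOfHom {X : Type u} [Group X] (F : G ⥤ CategoryTheory.SingleObj X)
    (hF : ∀ a b (e : a ⟶ b), e ∈ wideSubquiverSymmetrify T a b → F.map (of e) = 1)
    {a b : G} (q : a ⟶ b) : F.map (loopOfHom T q) = F.map q := by
  simp [loopOfHom, treeHom, map_homOfPath_eq_one T F hF, comp_as_mul]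

abbrev nonTreeArrows : Set (Total (Generators G)) :=
  (wideSubquiverEquivSetTotal (wideSubquiverSymmetrify T))ᶜ

/-- Mathlib's `SpanningTree.endIsFree` only asserts that this basis exists; we need its
elements. -/
noncomputable def endBasis : FreeGroupBasis (nonTreeArrows T) (End (treeRoot T)) :=
  FreeGroupBasis.ofUniqueLift _ (fun e => loopOfHom T (of e.val.hom)) fun {X} _ f => by
    classical
    obtain ⟨F, hF, hF_unique⟩ := unique_lift fun a b (e : a ⟶ b) =>
      if h : e ∈ wideSubquiverSymmetrify T a b then 1 else f ⟨⟨a, b, e⟩, h⟩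
    have hF_tree : ∀ a b (e : a ⟶ b), e ∈ wideSubquiverSymmetrify T a b → F.map (of e) = 1 :=
      fun a b e he => (hF a b e).trans (dif_pos he)
    refine ⟨F.mapEnd _, fun ⟨⟨a, b, e⟩, he⟩ => ?_, fun E hE => ?_⟩
    · exact (map_loopOfHom T F hF_tree (of e)).trans ((hF a b e).trans (dif_neg he))
    · have hE_functor : functorOfMonoidHom T E = F := by
        refine hF_unique _ fun a b e => ?_
        change E (loopOfHom T (of e)) = _
        by_cases he : e ∈ wideSubquiverSymmetrify T a b
        · rw [dif_pos he]
          exact (congrArg E (loopOfHom_eq_id T e he)).trans E.map_one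
        · rw [dif_neg he]
          exact hE ⟨⟨a, b, e⟩, he⟩
      ext x
      calc E x = (functorOfMonoidHom T E).map x := congrArg E (loopOfHom_root T x).symm
        _ = F.map x := by rw [hE_functor]

lemma endBasis_apply (e : nonTreeArrows T) : endBasis T e = loopOfHom T (of e.val.hom) :=
  FreeGroup.lift_apply_of

end IsFreeGroupoid.SpanningTree

theorem IsPrimitive.map {G G' : Type*} [Group G] [Group G'] {a : G} (ha : IsPrimitive a)
    (e : G ≃* G') : IsPrimitive (e a) := by
  obtain ⟨ι, b, i, rfl⟩ := ha
  exact ⟨ι, b.map e, i, rfl⟩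

theorem IsPrimitive.exists_mulEquiv_apply_eq_of {G : Type*} [Group G] [IsFreeGroup G] {a : G}
    (ha : IsPrimitive a) :
    ∃ (φ : G ≃* G) (x : IsFreeGroup.Generators G), φ a = IsFreeGroup.of x := by
  obtain ⟨ι, b, i, rfl⟩ := ha
  let σ : ι ≃ IsFreeGroup.Generators G :=
    .ofFreeGroupEquiv (b.repr.symm.trans (IsFreeGroup.toFreeGroup G))
  refine ⟨b.repr.trans ((FreeGroup.freeGroupCongr σ).trans (IsFreeGroup.toFreeGroup G).symm),
    σ i, ?_⟩
  simp only [MulEquiv.trans_apply, FreeGroupBasis.repr_apply_coe, FreeGroup.freeGroupCongr_apply,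
    FreeGroup.map.of, IsFreeGroup.toFreeGroup_symm_apply]
  rfl

open IsFreeGroupoid.SpanningTree in
theorem IsFreeGroup.isPrimitive_of_mem {G : Type} [Group G] [IsFreeGroup G] (H : Subgroup G)
    (x : IsFreeGroup.Generators G) (hx : IsFreeGroup.of x ∈ H) :
    IsPrimitive (⟨IsFreeGroup.of x, hx⟩ : H) := by
  let r : ActionCategory G (G ⧸ H) := ActionCategory.objEquiv G (G ⧸ H) ↑(1 : G)
  -- The connectedness instance found by search lives on a different (defeq) category structure
  -- than the one `generators_connected` expects, so it is passed by hand.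
  let T := @geodesicSubtree _ _ _
    (@generators_connected _ _ ActionCategory.instIsConnectedOfIsPretransitiveOfNonempty _ r)
  have hloop : IsFreeGroup.of x • ((1 : G) : G ⧸ H) = (1 : G) := by
    rw [MulAction.Quotient.smul_mk, smul_eq_mul, mul_one, QuotientGroup.eq, mul_one]
    exact H.inv_mem hx
  let ε : (show IsFreeGroupoid.Generators (ActionCategory G (G ⧸ H)) from r) ⟶ r := ⟨x, hloop⟩
  have hε : ⟨_, _, ε⟩ ∈ nonTreeArrows T := by
    rintro (h | h) <;> exact (isEmpty_hom_root (V := T) _).elim ⟨_, h⟩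
  let e := ActionCategory.endMulEquivSubgroup H
  refine ⟨_, (endBasis T).map e, ⟨_, hε⟩, ?_⟩
  calc (endBasis T).map e ⟨_, hε⟩ = e (loopOfHom T (IsFreeGroupoid.of ε)) :=
        (FreeGroupBasis.map_apply _ _ _).trans (congrArg e (endBasis_apply T _))
    _ = e (IsFreeGroupoid.of ε) := congrArg e (loopOfHom_root T _)
    _ = ⟨IsFreeGroup.of x, hx⟩ := rfl

theorem stmt2 {α : Type} (a : FreeGroup α) (ha : IsPrimitive a)
    (H : Subgroup (FreeGroup α)) (haH : a ∈ H) :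
    IsPrimitive (⟨a, haH⟩ : H) := by
  obtain ⟨φ, x, hφ⟩ := ha.exists_mulEquiv_apply_eq_of
  have hx : IsFreeGroup.of x ∈ H.map (φ : FreeGroup α →* FreeGroup α) :=
    hφ ▸ Subgroup.mem_map_of_mem _ haH
  have hsymm : (φ.subgroupMap H).symm ⟨IsFreeGroup.of x, hx⟩ = ⟨a, haH⟩ :=
    (MulEquiv.symm_apply_eq _).mpr (Subtype.ext hφ.symm)
  exact hsymm ▸ (IsFreeGroup.isPrimitive_of_mem _ x hx).map (φ.subgroupMap H).symm
end

section
/- Let e₁, …, eₙ be a free basis of the free group Fₙ of rank n ≥ 1, and let m₁, …, mₙ be integers all of absolute value different from 1 (and the product nontrivial). Then the element e₁^{m₁} e₂^{m₂} ⋯ eₙ^{mₙ} is not a primitive element of Fₙ. -/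
open Finset

lemma Pi.card_eval_fiber_eq {ι G : Type*} [Group G] (i : ι) (g g' : G) :
    Nat.card {f : ι → G // f i = g} = Nat.card {f : ι → G // f i = g'} := by
  classical
  exact Nat.card_congr <| (Equiv.mulRight (Pi.mulSingle i (g⁻¹ * g'))).subtypeEquiv fun f => by
    simp [← eq_mul_inv_iff_mul_eq]

lemma IsPrimitive.card_hom_fiber_eq {F : Type*} [Group F] {w : F} (hw : IsPrimitive w)
    (G : Type*) [Group G] (g g' : G) :
    Nat.card {φ : F →* G // φ w = g} = Nat.card {φ : F →* G // φ w = g'} := by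
  obtain ⟨κ, b, i, rfl⟩ := hw
  have e (g : G) : {φ : F →* G // φ (b i) = g} ≃ {f : κ → G // f i = g} :=
    b.lift.symm.subtypeEquiv fun _ => Iff.rfl
  rw [Nat.card_congr (e g), Nat.card_congr (e g'), Pi.card_eval_fiber_eq]

lemma IsPrimitive.card_lift_fiber_eq {ι : Type*} {w : FreeGroup ι} (hw : IsPrimitive w)
    (G : Type*) [Group G] (g g' : G) :
    Nat.card {x : ι → G // FreeGroup.lift x w = g} =
      Nat.card {x : ι → G // FreeGroup.lift x w = g'} := by
  have e (g : G) : {x : ι → G // FreeGroup.lift x w = g} ≃ {φ : FreeGroup ι →* G // φ w = g} :=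
    FreeGroup.lift.subtypeEquiv fun _ => Iff.rfl
  rw [Nat.card_congr (e g), Nat.card_congr (e g'), hw.card_hom_fiber_eq]

lemma exists_ne_one_zpow_eq_one {G : Type*} [Group G] [Finite G] {m : ℤ} (h1 : m.natAbs ≠ 1)
    (hdvd : m.natAbs ∣ Nat.card G) : ∃ x : G, x ≠ 1 ∧ x ^ m = 1 := by
  have hp := Nat.minFac_prime h1
  have : Fact m.natAbs.minFac.Prime := ⟨hp⟩
  obtain ⟨x, hx⟩ := exists_prime_orderOf_dvd_card' _ ((Nat.minFac_dvd _).trans hdvd)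
  refine ⟨x, fun h => hp.one_lt.ne' (by rw [← hx, h, orderOf_one]), ?_⟩
  rw [← orderOf_dvd_iff_zpow_eq_one, hx]
  exact Int.natCast_dvd.mpr (Nat.minFac_dvd _)

lemma Nat.exists_prime_forall_dvd_sub_one (s : Finset ℕ) (hs : 0 ∉ s) :
    ∃ q, q.Prime ∧ ∀ k ∈ s, k ∣ q - 1 := by
  obtain ⟨q, hq, -, hmod⟩ :=
    exists_prime_gt_modEq_one 1 (prod_ne_zero_iff.mpr fun k hk h => hs (h ▸ hk))
  have hprod : ∏ k ∈ s, k ∣ q - 1 := (Nat.modEq_iff_dvd' hq.one_lt.le).mp hmod.symm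
  exact ⟨q, hq, fun k hk => (dvd_prod_of_mem _ hk).trans hprod⟩

/-- `⟨a, b⟩` stands for the affine map `t ↦ a * t + b`; multiplication is composition. -/
@[ext]
structure Aff (R : Type*) [CommRing R] where
  a : Rˣ
  b : R

namespace Aff

variable {R : Type*} [CommRing R]

instance : Mul (Aff R) := ⟨fun x y => ⟨x.a * y.a, x.b + x.a * y.b⟩⟩
instance : One (Aff R) := ⟨⟨1, 0⟩⟩
instance : Inv (Aff R) := ⟨fun x => ⟨x.a⁻¹, -(x.a⁻¹ * x.b)⟩⟩

@[simp] lemma a_mul (x y : Aff R) : (x * y).a = x.a * y.a := rfl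
@[simp] lemma b_mul (x y : Aff R) : (x * y).b = x.b + x.a * y.b := rfl
@[simp] lemma a_one : (1 : Aff R).a = 1 := rfl
@[simp] lemma b_one : (1 : Aff R).b = 0 := rfl
@[simp] lemma a_inv (x : Aff R) : x⁻¹.a = x.a⁻¹ := rfl
@[simp] lemma b_inv (x : Aff R) : x⁻¹.b = -(x.a⁻¹ * x.b) := rfl

instance : Group (Aff R) where
  mul_assoc x y z := by ext <;> simp [mul_assoc]; ring
  one_mul x := by ext <;> simp
  mul_one x := by ext <;> simp
  inv_mul_cancel x := by ext <;> simp

def equivProd : Aff R ≃ Rˣ × R where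
  toFun x := (x.a, x.b)
  invFun p := ⟨p.1, p.2⟩

instance [Finite R] : Finite (Aff R) := .of_equiv _ equivProd.symm

def toUnits : Aff R →* Rˣ where
  toFun := a
  map_one' := rfl
  map_mul' _ _ := rfl

def ofUnits : Rˣ →* Aff R where
  toFun u := ⟨u, 0⟩
  map_one' := rfl
  map_mul' _ _ := by ext <;> simp

lemma mk_zpow_eq_one {u : Rˣ} (hu : IsUnit (1 - (u : R))) {m : ℤ} (hm : u ^ m = 1) (b : R) :
    (⟨u, b⟩ : Aff R) ^ m = 1 := by
  obtain ⟨v, hv⟩ := hu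
  have hconj : (⟨u, b⟩ : Aff R) = MulAut.conj (⟨1, v⁻¹ * b⟩ : Aff R) (ofUnits u) := by
    ext
    · simp [ofUnits]
    · simp only [ofUnits, MulAut.conj_apply, b_mul, a_mul, b_inv, MonoidHom.coe_mk,
        OneHom.coe_mk, Units.val_one, one_mul, inv_one, mul_zero, add_zero]
      linear_combination (b * ↑v⁻¹) * hv - b * v.inv_mul
  rw [hconj, ← map_zpow, ← map_zpow, hm, map_one, map_one]

section Lift

variable {ι : Type*}

lemma a_lift (x : ι → Aff R) (w : FreeGroup ι) :
    (FreeGroup.lift x w).a = FreeGroup.lift (fun i => (x i).a) w :=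
  FreeGroup.lift_unique (toUnits.comp (FreeGroup.lift x)) (by simp [toUnits])

lemma b_lift_add (u : ι → Rˣ) (b b' : ι → R) (w : FreeGroup ι) :
    (FreeGroup.lift (fun i => (⟨u i, b i + b' i⟩ : Aff R)) w).b =
      (FreeGroup.lift (fun i => (⟨u i, b i⟩ : Aff R)) w).b +
        (FreeGroup.lift (fun i => (⟨u i, b' i⟩ : Aff R)) w).b := by
  induction w with
  | C1 => simp
  | of i => simp
  | inv_of i _ => simp; ring
  | mul x y hx hy => simp only [map_mul, b_mul, a_lift, hx, hy]; ring

def translationHom (u : ι → Rˣ) (w : FreeGroup ι) : (ι → R) →+ R :=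
  AddMonoidHom.mk' (fun b => (FreeGroup.lift (fun i => (⟨u i, b i⟩ : Aff R)) w).b)
    (b_lift_add u · · w)

lemma lift_mk_eq_mk_one_iff (u : ι → Rˣ) (b : ι → R) (w : FreeGroup ι) (c : R) :
    FreeGroup.lift (fun i => (⟨u i, b i⟩ : Aff R)) w = ⟨1, c⟩ ↔
      FreeGroup.lift u w = 1 ∧ translationHom u w b = c := by
  rw [Aff.ext_iff, a_lift]
  rfl

lemma card_lift_mk_eq_mk_one_le [Fintype ι] [Finite R] (u : ι → Rˣ) (w : FreeGroup ι) (c : R) :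
    Nat.card {b : ι → R // FreeGroup.lift (fun i => (⟨u i, b i⟩ : Aff R)) w = ⟨1, c⟩} ≤
      Nat.card {b : ι → R // FreeGroup.lift (fun i => (⟨u i, b i⟩ : Aff R)) w = 1} := by
  classical
  have := Fintype.ofFinite R
  simp only [Nat.card_eq_fintype_card, Fintype.card_subtype]
  rw [show (1 : Aff R) = ⟨1, 0⟩ from rfl]
  simp_rw [lift_mk_eq_mk_one_iff]
  by_cases hu : FreeGroup.lift u w = 1
  · simp only [hu, true_and]
    by_cases hc : c ∈ Set.range (translationHom u w)
    · exact (AddMonoidHom.card_fiber_eq_of_mem_range _ hc ⟨0, map_zero _⟩).le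
    · simp [filter_false_of_mem fun b _ hb => hc ⟨b, hb⟩]
  · simp [hu]

def liftFiberEquivSigma (w : FreeGroup ι) (g : Aff R) :
    {x : ι → Aff R // FreeGroup.lift x w = g} ≃
      Σ u : ι → Rˣ, {b : ι → R // FreeGroup.lift (fun i => (⟨u i, b i⟩ : Aff R)) w = g} where
  toFun x := ⟨fun i => (x.1 i).a, fun i => (x.1 i).b, x.2⟩
  invFun p := ⟨fun i => ⟨p.1 i, p.2.1 i⟩, p.2.2⟩

lemma card_lift_fiber_lt [Fintype ι] [Finite R] [Nontrivial R] (w : FreeGroup ι) (u : ι → Rˣ)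
    (hu : ∀ b : ι → R, FreeGroup.lift (fun i => (⟨u i, b i⟩ : Aff R)) w = 1) :
    Nat.card {x : ι → Aff R // FreeGroup.lift x w = ⟨1, 1⟩} <
      Nat.card {x : ι → Aff R // FreeGroup.lift x w = 1} := by
  classical
  have := Fintype.ofFinite R
  rw [Nat.card_congr (liftFiberEquivSigma w _), Nat.card_congr (liftFiberEquivSigma w _),
    Nat.card_sigma, Nat.card_sigma]
  refine sum_lt_sum (fun v _ => card_lift_mk_eq_mk_one_le v w 1) ⟨u, mem_univ u, ?_⟩
  have hne : (1 : Aff R) ≠ ⟨1, 1⟩ := fun h => zero_ne_one (congrArg Aff.b h)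
  simp [hu, hne, Fintype.card_pos]

end Lift

lemma exists_forall_mk_zpow_eq_one (q : ℕ) [Fact q.Prime] {m : ℤ} (hm : m.natAbs ≠ 1)
    (hdvd : m ≠ 0 → m.natAbs ∣ q - 1) : ∃ u : (ZMod q)ˣ, ∀ b, (⟨u, b⟩ : Aff (ZMod q)) ^ m = 1 := by
  by_cases h0 : m = 0
  · exact ⟨1, fun b => by rw [h0, zpow_zero]⟩
  rw [← ZMod.card_units, ← Nat.card_eq_fintype_card] at hdvd
  obtain ⟨u, hu, hum⟩ := exists_ne_one_zpow_eq_one hm (hdvd h0)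
  have hsub : (1 : ZMod q) - u ≠ 0 := sub_ne_zero.mpr fun h => hu (Units.ext h.symm)
  exact ⟨u, mk_zpow_eq_one hsub.isUnit hum⟩

end Aff

theorem stmt3_general (n : ℕ) (m : Fin n → ℤ) (hm : ∀ i, (m i).natAbs ≠ 1) :
    ¬ IsPrimitive ((List.ofFn fun i => (FreeGroup.of i : FreeGroup (Fin n)) ^ (m i)).prod) := by
  intro hw
  obtain ⟨q, hq, hdvd⟩ := Nat.exists_prime_forall_dvd_sub_one
    ((univ.image fun i => (m i).natAbs).erase 0) (notMem_erase 0 _)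
  have : Fact q.Prime := ⟨hq⟩
  choose u hu using fun i => Aff.exists_forall_mk_zpow_eq_one q (hm i) fun h0 =>
    hdvd _ (mem_erase.mpr ⟨Int.natAbs_ne_zero.mpr h0, mem_image_of_mem _ (mem_univ i)⟩)
  refine (Aff.card_lift_fiber_lt _ u fun b => ?_).ne (hw.card_lift_fiber_eq _ _ _)
  simp [map_list_prod, List.prod_eq_one, hu]

theorem stmt3 (n : ℕ) (hn : 1 ≤ n) (m : Fin n → ℤ) (hm : ∀ i, (m i).natAbs ≠ 1)
    (hne : (List.ofFn fun i => (FreeGroup.of i : FreeGroup (Fin n)) ^ (m i)).prod ≠ 1) :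
    ¬ IsPrimitive ((List.ofFn fun i => (FreeGroup.of i : FreeGroup (Fin n)) ^ (m i)).prod) :=
  stmt3_general n m hm
end

section
/- Let F be a free group with basis {e₁, e₂, …, e_{2n}, …}. Define a_{ij} := e_{i+j}⁵ e_i and b_{kl} := e_k⁻¹ e_{k+l}⁻⁴ for 1 ≤ i,j,k,l ≤ n. If i ≠ k, or (i,j) = (k,l), then the pair (a_{ij}, b_{kl}) can be extended to a free basis of F; in particular a_{ij} and b_{kl} freely generate a free subgroup of rank 2. -/
/-!
Both elements arise from the standard basis by Nielsen moves, i.e. by automorphisms of the free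
group: transvections `e_s ↦ e_t ^ m * e_s` (`t ≠ s`) and inversions `e_s ↦ e_s⁻¹`. For `i ≠ k`
the two elements are produced at the positions `i` and `k`; since `i + j = k` and `k + l = i`
cannot both hold, the two moves can be ordered so that neither destroys the input of the other.
For `(i, j) = (k, l)` and `u = i + j` one has `(e_u ^ 5 * e_i)⁻¹ * e_u = e_i⁻¹ * e_u ^ (-4)`, so
the pair is obtained from `(e_i, e_u)` by two transvections. Finally, two distinct members of a
free basis freely generate the subgroup they generate, as the projection killing the other basis
elements is a retraction onto it.
-/

open Function Subgroup

namespace FreeGroupBasis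

variable {ι G : Type*} [Group G]

noncomputable def ofLiftInverse (b : FreeGroupBasis ι G) (v w : ι → G)
    (hvw : ∀ i, b.lift v (w i) = b i) (hwv : ∀ i, b.lift w (v i) = b i) :
    FreeGroupBasis ι G :=
  b.map <| MonoidHom.toMulEquiv (b.lift v) (b.lift w)
    (b.ext_hom _ _ fun i => by simp [hwv]) (b.ext_hom _ _ fun i => by simp [hvw])

@[simp]
lemma coe_ofLiftInverse (b : FreeGroupBasis ι G) (v w : ι → G) (hvw hwv) :
    ⇑(b.ofLiftInverse v w hvw hwv) = v :=
  funext fun i => by simp [ofLiftInverse]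

section Nielsen

variable [DecidableEq ι]

noncomputable def transvection (b : FreeGroupBasis ι G) {s t : ι} (hst : s ≠ t) (m : ℤ) :
    FreeGroupBasis ι G :=
  b.ofLiftInverse (update b s (b t ^ m * b s)) (update b s (b t ^ (-m) * b s))
    (fun i => by rcases eq_or_ne i s with rfl | hi <;> simp [hst.symm, *])
    (fun i => by rcases eq_or_ne i s with rfl | hi <;> simp [hst.symm, *])

@[simp]
lemma coe_transvection (b : FreeGroupBasis ι G) {s t : ι} (hst : s ≠ t) (m : ℤ) :
    ⇑(b.transvection hst m) = update b s (b t ^ m * b s) :=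
  coe_ofLiftInverse ..

noncomputable def invert (b : FreeGroupBasis ι G) (s : ι) : FreeGroupBasis ι G :=
  b.ofLiftInverse (update b s (b s)⁻¹) (update b s (b s)⁻¹)
    (fun i => by rcases eq_or_ne i s with rfl | hi <;> simp [*])
    (fun i => by rcases eq_or_ne i s with rfl | hi <;> simp [*])

@[simp]
lemma coe_invert (b : FreeGroupBasis ι G) (s : ι) :
    ⇑(b.invert s) = update b s (b s)⁻¹ :=
  coe_ofLiftInverse ..

end Nielsen

lemma exists_basis_zpow_mul_inv_mul_zpow_of_ne (b : FreeGroupBasis ι G) {i k u v : ι}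
    (hik : i ≠ k) (hui : u ≠ i) (hvk : v ≠ k) (huv : ¬(u = k ∧ v = i)) (m n : ℤ) :
    ∃ B : FreeGroupBasis ι G, B i = b u ^ m * b i ∧ B k = (b k)⁻¹ * b v ^ n := by
  classical
  -- The move at `k` reads `b v` and the one at `i` rewrites `b i`: when `v = i`, do `k` first.
  by_cases hvi : v = i
  · have huk : u ≠ k := fun huk => huv ⟨huk, hvi⟩
    refine ⟨((b.transvection hvk.symm (-n)).invert k).transvection hui.symm m, ?_, ?_⟩ <;>
      simp [hik, hik.symm, huk]
  · refine ⟨((b.transvection hui.symm m).transvection hvk.symm (-n)).invert k, ?_, ?_⟩ <;>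
      simp [hik, hik.symm, hvi]

lemma exists_basis_zpow_mul_inv_mul_zpow_of_eq (b : FreeGroupBasis ι G) {i u : ι} (hui : u ≠ i)
    (m : ℤ) : ∃ B : FreeGroupBasis ι G, B i = b u ^ m * b i ∧ B u = (b i)⁻¹ * b u ^ (1 - m) := by
  classical
  refine ⟨(b.transvection hui.symm m).transvection hui (-1), ?_, ?_⟩
  · simp [hui.symm]
  · simp [hui]
    group

lemma injective_lift_comp (b : FreeGroupBasis ι G) {κ : Type*} {v : κ → ι} (hv : Injective v) :
    Injective (FreeGroup.lift (b ∘ v)) := by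
  classical
  refine LeftInverse.injective (g := b.lift (extend v FreeGroup.of 1)) fun x => ?_
  change ((b.lift _).comp (FreeGroup.lift _)) x = MonoidHom.id _ x
  congr 1
  exact FreeGroup.ext_hom _ _ fun x => by simp [hv.extend_apply]

noncomputable def restrict (b : FreeGroupBasis ι G) {κ : Type*} {v : κ → ι} (hv : Injective v) :
    FreeGroupBasis κ (closure (Set.range (b ∘ v))) :=
  ofRepr ((MonoidHom.ofInjective (b.injective_lift_comp hv)).trans
    (MulEquiv.subgroupCongr FreeGroup.range_lift_eq_closure)).symm

@[simp]
lemma coe_restrict_apply (b : FreeGroupBasis ι G) {κ : Type*} {v : κ → ι} (hv : Injective v)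
    (x : κ) : (b.restrict hv x : G) = b (v x) := by
  change ((MonoidHom.ofInjective (b.injective_lift_comp hv) (FreeGroup.of x)) : G) = _
  simp [MonoidHom.ofInjective_apply]

lemma exists_basis_closure_pair (b : FreeGroupBasis ι G) {s t : ι} (hst : s ≠ t) {x y : G}
    (hs : b s = x) (ht : b t = y) :
    ∃ c : FreeGroupBasis (Fin 2) (closure {x, y}),
      c 0 = ⟨x, subset_closure (by simp)⟩ ∧ c 1 = ⟨y, subset_closure (by simp)⟩ := by
  subst hs ht
  have hv : Injective ![s, t] := by
    intro p q; fin_cases p <;> fin_cases q <;> simp [hst, hst.symm]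
  have hrange : closure (Set.range (b ∘ ![s, t])) = closure {b s, b t} := by
    rw [Set.range_comp, Matrix.range_cons_cons_empty, Set.image_pair]
  refine ⟨(b.restrict hv).map (MulEquiv.subgroupCongr hrange), ?_, ?_⟩ <;>
    ext <;> simp

end FreeGroupBasis

theorem stmt6 (i j k l : ℕ) (hj : 1 ≤ j) (hl : 1 ≤ l)
    (hcase : i ≠ k ∨ (i, j) = (k, l)) :
    (∃ (ι : Type) (b : FreeGroupBasis ι (FreeGroup ℕ)) (s t : ι), s ≠ t ∧
        b s = (FreeGroup.of (i + j)) ^ 5 * FreeGroup.of i ∧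
        b t = (FreeGroup.of k)⁻¹ * (FreeGroup.of (k + l)) ^ (-4 : ℤ)) ∧
    ∃ c : FreeGroupBasis (Fin 2) (Subgroup.closure
        ({(FreeGroup.of (i + j)) ^ 5 * FreeGroup.of i,
          (FreeGroup.of k)⁻¹ * (FreeGroup.of (k + l)) ^ (-4 : ℤ)} : Set (FreeGroup ℕ))),
      c 0 = ⟨(FreeGroup.of (i + j)) ^ 5 * FreeGroup.of i, Subgroup.subset_closure (by simp)⟩ ∧
      c 1 = ⟨(FreeGroup.of k)⁻¹ * (FreeGroup.of (k + l)) ^ (-4 : ℤ),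
              Subgroup.subset_closure (by simp)⟩ := by
  rcases hcase with hik | hijkl
  · obtain ⟨B, hBi, hBk⟩ :=
      (FreeGroupBasis.ofFreeGroup ℕ).exists_basis_zpow_mul_inv_mul_zpow_of_ne
        (u := i + j) (v := k + l) hik (by omega) (by omega) (by omega) 5 (-4)
    exact ⟨⟨ℕ, B, i, k, hik, hBi, hBk⟩, B.exists_basis_closure_pair hik hBi hBk⟩
  · obtain ⟨rfl, rfl⟩ := Prod.ext_iff.mp hijkl
    have hu : i + j ≠ i := by omega
    obtain ⟨B, hBi, hBu⟩ :=
      (FreeGroupBasis.ofFreeGroup ℕ).exists_basis_zpow_mul_inv_mul_zpow_of_eq hu 5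
    exact ⟨⟨ℕ, B, i, i + j, hu.symm, hBi, hBu⟩, B.exists_basis_closure_pair hu.symm hBi hBu⟩
end

section
/- Let a group G act on a tree T. If u and v are hyperbolic elements of G whose axes intersect in a segment of length at least tr(u) + tr(v) + 1, and all edge stabilizers of the action are trivial, then u and v commute. -/
/-!
Let `f` be an isometry of a tree and `x`, `y` two points of its axis with `d(x, y) > trLen f`.
The four-point condition gives `d(x, f y) + d(y, f x) = 2 d(x, y)`, and if the larger of the two
were less than `d(x, y) + trLen f`, the median of `x`, `y`, `f y` would be displaced by less than
`trLen f`. Hence `f` shifts the geodesic `[x, y]` along itself by `trLen f` in one of the two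
directions. So `u` and `v` act on `[x, y]` as shifts by integers `τu`, `τv` with
`|τu| + |τv| < d(x, y)`; then `u v` and `v u` agree on two adjacent vertices of `[x, y]`, and
since edge stabilizers are trivial, `u v = v u`.
-/

/-- The translation length of a map on a graph: the minimal displacement of a vertex. -/
noncomputable def trLen {V : Type*} (T : SimpleGraph V) (f : V → V) : ℕ :=
  sInf (Set.range fun x => T.dist x (f x))

/-- The axis of a map on a graph: the set of vertices of minimal displacement. -/
def axisSet {V : Type*} (T : SimpleGraph V) (f : V → V) : Set V :=
  {x | T.dist x (f x) = trLen T f}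

lemma trLen_le_dist {V : Type*} (T : SimpleGraph V) (f : V → V) (p : V) :
    trLen T f ≤ T.dist p (f p) :=
  Nat.sInf_le ⟨p, rfl⟩

namespace SimpleGraph

variable {V : Type*} {T : SimpleGraph V} {a b c m n : V}

def Between (T : SimpleGraph V) (a m b : V) : Prop :=
  T.dist a m + T.dist m b = T.dist a b

lemma Hom.dist_map_le {W : Type*} {T' : SimpleGraph W} (f : T →g T') (h : T.Reachable a b) :
    T'.dist (f a) (f b) ≤ T.dist a b := by
  obtain ⟨p, hp⟩ := h.exists_walk_length_eq_dist
  simpa [hp] using dist_le (p.map f)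

lemma Between.symm (h : T.Between a m b) : T.Between b m a := by
  unfold Between at *
  rw [dist_comm, add_comm, dist_comm (u := m), h, dist_comm]

lemma Connected.between_trans (hT : T.Connected) (h₁ : T.Between a m b)
    (h₂ : T.Between a b c) : T.Between a m c := by
  have := hT.dist_triangle (u := a) (v := m) (w := c)
  have := hT.dist_triangle (u := m) (v := b) (w := c)
  unfold Between at *
  omega

lemma Adj.between (h : T.Adj b c) (hd : T.dist a b + 1 = T.dist a c) : T.Between a b c := by
  rwa [Between, dist_eq_one_iff_adj.2 h]

namespace Walk

lemma dist_getVert_getVert {w : T.Walk a b} (hw : w.length = T.dist a b) {i j : ℕ}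
    (hij : i ≤ j) (hj : j ≤ w.length) : T.dist (w.getVert i) (w.getVert j) = j - i := by
  have h := length_eq_dist_of_subwalk hw (((w.take j).isSubwalk_drop i).trans (w.isSubwalk_take j))
  rw [drop_length, take_length, min_eq_left hj] at h
  rwa [take_getVert, min_eq_right hij, eq_comm] at h

lemma between_getVert {w : T.Walk a b} (hw : w.length = T.dist a b) {i : ℕ}
    (hi : i ≤ w.length) :
    T.Between a (w.getVert i) b ∧ T.dist a (w.getVert i) = i := by
  have h₁ := dist_getVert_getVert hw (Nat.zero_le i) hi
  have h₂ := dist_getVert_getVert hw hi le_rfl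
  rw [getVert_zero] at h₁
  rw [getVert_length] at h₂
  exact ⟨by unfold Between; omega, by omega⟩

end Walk

lemma Connected.exists_adj_dist_add_one (hT : T.Connected) (h : a ≠ b) :
    ∃ b', T.Adj b b' ∧ T.dist a b' + 1 = T.dist a b := by
  obtain ⟨w, hw⟩ := hT.exists_walk_length_eq_dist b a
  have hpos : 0 < w.length := by
    rw [hw]; exact hT.pos_dist_of_ne h.symm
  have h₁ := w.dist_getVert_getVert hw (i := 1) hpos le_rfl
  rw [Walk.getVert_length] at h₁
  refine ⟨w.getVert 1, by simpa using w.adj_getVert_succ hpos, ?_⟩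
  rw [dist_comm, h₁, dist_comm, ← hw]
  omega

namespace IsTree

variable (hT : T.IsTree)
include hT

lemma eq_of_adj_of_dist_add_one {v w₁ w₂ : V} (h₁ : T.Adj w₁ v) (h₂ : T.Adj w₂ v)
    (hd₁ : T.dist c w₁ + 1 = T.dist c v) (hd₂ : T.dist c w₂ + 1 = T.dist c v) :
    w₁ = w₂ := by
  obtain ⟨p₁, hp₁⟩ := hT.connected.exists_walk_length_eq_dist c w₁
  obtain ⟨p₂, hp₂⟩ := hT.connected.exists_walk_length_eq_dist c w₂
  have hpath₁ := (p₁.concat h₁).isPath_of_length_eq_dist (by simp [hp₁, hd₁])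
  have hpath₂ := (p₂.concat h₂).isPath_of_length_eq_dist (by simp [hp₂, hd₂])
  have := (hT.existsUnique_path c v).unique hpath₁ hpath₂
  simpa using congrArg Walk.penultimate this

lemma between_of_adj {b' : V} (hadj : T.Adj b b') (ha : T.dist a b' + 1 = T.dist a b)
    (hc : T.dist c b + 1 = T.dist c b') : T.Between a b c := by
  induction hn : T.dist a b' using Nat.strong_induction_on generalizing b b' with
  | _ n ih =>
  obtain rfl | hab' := eq_or_ne a b'
  · exact (hadj.between hc).symm
  obtain ⟨b'', hadj', ha'⟩ := hT.connected.exists_adj_dist_add_one hab'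
  rcases hT.dist_eq_dist_add_one_of_adj c hadj' with hc' | hc'
  · obtain rfl := hT.eq_of_adj_of_dist_add_one hadj hadj'.symm hc hc'.symm
    omega
  · have hab'c := ih _ (by omega) hadj' ha' hc'.symm rfl
    exact (hT.connected.between_trans (hadj.between hc) hab'c.symm).symm

lemma exists_median (a b c : V) :
    ∃ m, T.Between a m b ∧ T.Between b m c ∧ T.Between a m c := by
  induction hn : T.dist a b using Nat.strong_induction_on generalizing b with
  | _ n ih =>
  obtain rfl | hab := eq_or_ne a b
  · exact ⟨a, by simp [Between], by simp [Between], by simp [Between]⟩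
  obtain ⟨b', hadj, ha⟩ := hT.connected.exists_adj_dist_add_one hab
  rcases hT.dist_eq_dist_add_one_of_adj c hadj with hc | hc
  · obtain ⟨m, hamb', hb'mc, hamc⟩ := ih _ (by omega) b' rfl
    exact ⟨m, hT.connected.between_trans hamb' (hadj.symm.between ha),
      (hT.connected.between_trans hb'mc.symm (hadj.symm.between hc.symm)).symm, hamc⟩
  · exact ⟨b, by simp [Between], by simp [Between], hT.between_of_adj hadj ha hc.symm⟩

lemma getVert_eq_of_between {w : T.Walk a b} (hw : w.length = T.dist a b)
    (hm : T.Between a m b) : w.getVert (T.dist a m) = m := by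
  obtain ⟨p, hp⟩ := hT.connected.exists_walk_length_eq_dist a m
  obtain ⟨q, hq⟩ := hT.connected.exists_walk_length_eq_dist m b
  have hpq : (p.append q).length = T.dist a b := by rw [Walk.length_append, hp, hq, hm]
  have := (hT.existsUnique_path a b).unique (w.isPath_of_length_eq_dist hw)
    ((p.append q).isPath_of_length_eq_dist hpq)
  rw [this, ← hp]
  simp [Walk.getVert_append']

lemma eq_of_between_of_dist_eq (hm : T.Between a m b) (hn : T.Between a n b)
    (h : T.dist a m = T.dist a n) : m = n := by
  obtain ⟨w, hw⟩ := hT.connected.exists_walk_length_eq_dist a b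
  rw [← hT.getVert_eq_of_between hw hm, ← hT.getVert_eq_of_between hw hn, h]

lemma dist_add_dist_of_between (hm : T.Between a m b) (hn : T.Between a n b)
    (h : T.dist a m ≤ T.dist a n) : T.dist a m + T.dist m n = T.dist a n := by
  obtain ⟨w, hw⟩ := hT.connected.exists_walk_length_eq_dist a b
  have hnb : T.dist a n ≤ w.length := by unfold Between at hn; omega
  have := w.dist_getVert_getVert hw h hnb
  rw [hT.getVert_eq_of_between hw hm, hT.getVert_eq_of_between hw hn] at this
  omega

theorem dist_add_dist_le_max (a b c e : V) :
    T.dist a b + T.dist c e ≤ max (T.dist a c + T.dist b e) (T.dist a e + T.dist b c) := by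
  obtain ⟨m, hamb, hbmc, hamc⟩ := hT.exists_median a b c
  obtain ⟨n, hanb, hbne, hane⟩ := hT.exists_median a b e
  have := hT.connected.dist_triangle (u := c) (v := m) (w := e)
  have := hT.connected.dist_triangle (u := m) (v := n) (w := e)
  have := dist_comm (G := T) (u := m) (v := b)
  have := dist_comm (G := T) (u := n) (v := b)
  have := dist_comm (G := T) (u := m) (v := c)
  have := dist_comm (G := T) (u := m) (v := n)
  unfold Between at *
  rcases le_total (T.dist a m) (T.dist a n) with h | h
  · have := hT.dist_add_dist_of_between hamb hanb h
    omega
  · have := hT.dist_add_dist_of_between hanb hamb h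
    omega

variable {f : V → V} (hf : ∀ a b, T.dist (f a) (f b) = T.dist a b) {x y : V}
include hf

lemma dist_add_dist_map_eq (hx : x ∈ axisSet T f) (hy : y ∈ axisSet T f)
    (hD : trLen T f < T.dist x y) :
    T.dist x (f y) + T.dist y (f x) = 2 * T.dist x y := by
  have h₁ := hT.dist_add_dist_le_max x y (f x) (f y)
  have h₂ := hT.dist_add_dist_le_max x (f y) y (f x)
  have := hf x y
  have := hf y x
  have := dist_comm (G := T) (u := y) (v := x)
  have := dist_comm (G := T) (u := f y) (v := y)
  simp only [axisSet, Set.mem_ofPred_eq] at hx hy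
  omega

lemma dist_map_eq_add_trLen_of_le (hy : y ∈ axisSet T f)
    (hsum : T.dist x (f y) + T.dist y (f x) = 2 * T.dist x y)
    (hle : T.dist x y ≤ T.dist x (f y)) :
    T.dist x (f y) = T.dist x y + trLen T f := by
  simp only [axisSet, Set.mem_ofPred_eq] at hy
  have := hT.connected.dist_triangle (u := x) (v := y) (w := f y)
  obtain ⟨p, hxpy, hypfy, hxpfy⟩ := hT.exists_median x y (f y)
  have h₁ := hT.dist_add_dist_le_max (f p) y (f x) (f y)
  have h₂ := hT.dist_add_dist_le_max p (f p) y (f y)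
  -- otherwise the median `p` of `x`, `y`, `f y` is displaced by less than `trLen T f`
  have := trLen_le_dist T f p
  have := hf p x
  have := hf x y
  have := hf p y
  have := dist_comm (G := T) (u := p) (v := x)
  have := dist_comm (G := T) (u := p) (v := y)
  unfold Between at *
  omega

lemma dist_map_eq_add_trLen (hx : x ∈ axisSet T f) (hy : y ∈ axisSet T f)
    (hD : trLen T f < T.dist x y) :
    T.dist x (f y) = T.dist x y + trLen T f ∨ T.dist y (f x) = T.dist x y + trLen T f := by
  have hsum := hT.dist_add_dist_map_eq hf hx hy hD
  rcases le_total (T.dist x y) (T.dist x (f y)) with hle | hle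
  · exact Or.inl (hT.dist_map_eq_add_trLen_of_le hf hy hsum hle)
  · rw [dist_comm (u := x) (v := y)] at hsum hle ⊢
    exact Or.inr (hT.dist_map_eq_add_trLen_of_le hf hx (by omega) (by omega))

lemma map_getVert_eq {w : T.Walk x y} (hw : w.length = T.dist x y) {ℓ : ℕ}
    (hx : T.dist x (f x) = ℓ) (hy : T.dist y (f y) = ℓ)
    (hxy : T.dist x (f y) = T.dist x y + ℓ) {i : ℕ} (hi : i + ℓ ≤ w.length) :
    f (w.getVert i) = w.getVert (i + ℓ) := by
  obtain ⟨hp, hpi⟩ := w.between_getVert hw (i := i) (by omega)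
  obtain ⟨hq, hqi⟩ := w.between_getVert hw hi
  have := hT.connected.dist_triangle (u := x) (v := f x) (w := f (w.getVert i))
  have := hT.connected.dist_triangle (u := x) (v := f (w.getVert i)) (w := f y)
  have := hT.connected.dist_triangle (u := w.getVert (i + ℓ)) (v := y) (w := f y)
  have := hT.connected.dist_triangle (u := x) (v := w.getVert (i + ℓ)) (w := f y)
  have := hf x (w.getVert i)
  have := hf (w.getVert i) y
  unfold Between at hp hq
  exact hT.eq_of_between_of_dist_eq (a := x) (b := f y) (by unfold Between; omega)
    (by unfold Between; omega) (by omega)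

lemma exists_translation {w : T.Walk x y} (hw : w.length = T.dist x y)
    (hx : x ∈ axisSet T f) (hy : y ∈ axisSet T f) (hD : trLen T f < T.dist x y) :
    ∃ τ : ℤ, τ.natAbs = trLen T f ∧ ∀ i j : ℕ, i ≤ w.length → j ≤ w.length →
      (j : ℤ) = i + τ → f (w.getVert i) = w.getVert j := by
  rcases hT.dist_map_eq_add_trLen hf hx hy hD with h | h
  · refine ⟨trLen T f, by simp, fun i j hi hj hij => ?_⟩
    obtain rfl : j = i + trLen T f := by omega
    exact hT.map_getVert_eq hf hw hx hy h hj
  · refine ⟨-trLen T f, by simp, fun i j hi hj hij => ?_⟩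
    have hw' : w.reverse.length = T.dist y x := by simp [hw, dist_comm]
    have := hT.map_getVert_eq hf hw' hy hx (by rw [dist_comm (u := y) (v := x)]; exact h)
      (i := w.length - i) (by simp; omega)
    rwa [Walk.getVert_reverse, Walk.getVert_reverse, show w.length - (w.length - i) = i by omega,
      show w.length - (w.length - i + trLen T f) = j by omega] at this

end IsTree

end SimpleGraph

section GroupAction

open SimpleGraph

variable {G V : Type*} [Group G] [MulAction G V] {T : SimpleGraph V}

lemma dist_smul_smul (hT : T.Connected)
    (hadj : ∀ (g : G) (x y : V), T.Adj x y → T.Adj (g • x) (g • y)) (g : G) (a b : V) :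
    T.dist (g • a) (g • b) = T.dist a b := by
  let φ (g : G) : T →g T := ⟨(g • ·), hadj g _ _⟩
  refine le_antisymm ((φ g).dist_map_le (hT a b)) ?_
  simpa [φ] using (φ g⁻¹).dist_map_le (hT (g • a) (g • b))

lemma eq_of_smul_eq_smul_of_adj
    (hedge : ∀ (g : G) (x y : V), T.Adj x y → g • x = x → g • y = y → g = 1)
    {g h : G} {a b : V} (hab : T.Adj a b) (ha : g • a = h • a) (hb : g • b = h • b) :
    g = h :=
  (inv_mul_eq_one.mp <| hedge (h⁻¹ * g) a b hab (by rw [mul_smul, ha, inv_smul_smul])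
    (by rw [mul_smul, hb, inv_smul_smul])).symm

end GroupAction

theorem stmt11_general {G V : Type*} [Group G] [MulAction G V] (T : SimpleGraph V)
    (htree : T.IsTree)
    (hadj : ∀ (g : G) (x y : V), T.Adj x y → T.Adj (g • x) (g • y))
    (hedge : ∀ (g : G) (x y : V), T.Adj x y → g • x = x → g • y = y → g = 1)
    (u v : G)
    (x y : V)
    (hx : x ∈ axisSet T (u • ·) ∩ axisSet T (v • ·))
    (hy : y ∈ axisSet T (u • ·) ∩ axisSet T (v • ·))
    (hd : trLen T (u • ·) + trLen T (v • ·) + 1 ≤ T.dist x y) :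
    u * v = v * u := by
  obtain ⟨w, hw⟩ := htree.connected.exists_walk_length_eq_dist x y
  obtain ⟨τu, hτu, hu⟩ := htree.exists_translation (f := (u • ·))
    (dist_smul_smul htree.connected hadj u) hw hx.1 hy.1 (by omega)
  obtain ⟨τv, hτv, hv⟩ := htree.exists_translation (f := (v • ·))
    (dist_smul_smul htree.connected hadj v) hw hx.2 hy.2 (by omega)
  -- for `i = k, k + 1` the indices `i + τu`, `i + τv`, `i + τu + τv` stay on the segment
  set k := (-τu).toNat + (-τv).toNat with hk
  have hcomm : ∀ i : ℕ, k ≤ i → i ≤ k + 1 →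
      (u * v) • w.getVert i = (v * u) • w.getVert i := by
    intro i hi₁ hi₂
    rw [mul_smul, mul_smul, hv i (i + τv).toNat (by omega) (by omega) (by omega),
      hu _ (i + τv + τu).toNat (by omega) (by omega) (by omega),
      hu i (i + τu).toNat (by omega) (by omega) (by omega),
      hv _ (i + τu + τv).toNat (by omega) (by omega) (by omega)]
    congr 2
    omega
  exact eq_of_smul_eq_smul_of_adj hedge (w.adj_getVert_succ (by omega)) (hcomm _ le_rfl (by omega))
    (hcomm _ (by omega) le_rfl)

/-- If `u`, `v` are hyperbolic elements of a group acting on a tree with trivial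
edge stabilizers, and their axes intersect in a segment of length at least
`tr u + tr v + 1`, then `u` and `v` commute. -/
theorem stmt11 {G V : Type*} [Group G] [MulAction G V] (T : SimpleGraph V)
    (htree : T.IsTree)
    (hadj : ∀ (g : G) (x y : V), T.Adj x y → T.Adj (g • x) (g • y))
    (hedge : ∀ (g : G) (x y : V), T.Adj x y → g • x = x → g • y = y → g = 1)
    (u v : G) (hu : ∀ x : V, u • x ≠ x) (hv : ∀ x : V, v • x ≠ x)
    (x y : V)
    (hx : x ∈ axisSet T (u • ·) ∩ axisSet T (v • ·))
    (hy : y ∈ axisSet T (u • ·) ∩ axisSet T (v • ·))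
    (hd : trLen T (u • ·) + trLen T (v • ·) + 1 ≤ T.dist x y) :
    u * v = v * u :=
  stmt11_general T htree hadj hedge u v x y hx hy hd
end
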